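/- arXiv:1912.02093 — 2 statements merged into one kernel-verified Lean document; each statement's English description precedes it below -/
import Mathlib

section
/- The function q(x) satisfies 0 ≤ min{x-ℓ, u-x} - q(x) ≤ ω/4 for all x ∈ [ℓ, u]; that is, q is a uniform approximation of min{x-ℓ, u-x} with error at most ω/4. -/
/-!
Put `s = 2x - u - ℓ`. Then `min (x - ℓ) (u - x) = ((u - ℓ) - |s|) / 2`, so on the region `|s| ≤ ω`
the gap `min (x - ℓ) (u - x) - q x` is `(ω - |s|)² / (4ω)`, which lies between `0` and `ω / 4`;
elsewhere `q` coincides with the minimum.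
-/

lemma two_mul_min_eq_add_sub_abs {α : Type*} [AddCommGroup α] [LinearOrder α]
    [IsOrderedAddMonoid α] (a b : α) : 2 • min a b = a + b - |a - b| := by
  rw [← max_sub_min_eq_abs', two_nsmul, ← min_add_max a b]
  abel

lemma min_sub_sub_eq_half_sub_abs (ℓ u x : ℝ) :
    min (x - ℓ) (u - x) = ((u - ℓ) - |2 * x - u - ℓ|) / 2 := by
  have h := two_mul_min_eq_add_sub_abs (x - ℓ) (u - x)
  rw [nsmul_eq_mul, Nat.cast_ofNat] at h
  have hs : x - ℓ - (u - x) = 2 * x - u - ℓ := by ring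
  rw [hs] at h
  linarith

lemma huber_gap_eq {ω : ℝ} (hω : ω ≠ 0) (s : ℝ) :
    ω / 4 - |s| / 2 + s ^ 2 / (4 * ω) = (ω - |s|) ^ 2 / (4 * ω) := by
  rw [← sq_abs s]
  field_simp
  ring

lemma huber_gap_mem_Icc {ω s : ℝ} (hω : 0 < ω) (hs : |s| ≤ ω) :
    (ω - |s|) ^ 2 / (4 * ω) ∈ Set.Icc 0 (ω / 4) := by
  refine ⟨by positivity, ?_⟩
  rw [div_le_div_iff₀ (by positivity) (by norm_num)]
  have hsq : (ω - |s|) ^ 2 ≤ ω ^ 2 :=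
    pow_le_pow_left₀ (sub_nonneg.mpr hs) (sub_le_self ω (abs_nonneg s)) 2
  linarith

theorem stmt2_general (ℓ u ω : ℝ) (hω : 0 < ω)
    (q : ℝ → ℝ)
    (hq : ∀ x, q x = if |u + ℓ - 2*x| ≤ ω
        then (u - ℓ)/2 - ω/4 - (2*x - u - ℓ)^2/(4*ω)
        else min (x - ℓ) (u - x)) :
    ∀ x ∈ Set.Icc ℓ u,
      0 ≤ min (x - ℓ) (u - x) - q x ∧ min (x - ℓ) (u - x) - q x ≤ ω/4 := by
  intro x _
  have hs : |u + ℓ - 2 * x| = |2 * x - u - ℓ| := by rw [abs_sub_comm]; ring_nf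
  rw [hq, hs]
  split_ifs with h
  · have hgap : min (x - ℓ) (u - x) - ((u - ℓ) / 2 - ω / 4 - (2 * x - u - ℓ) ^ 2 / (4 * ω))
        = (ω - |2 * x - u - ℓ|) ^ 2 / (4 * ω) := by
      rw [min_sub_sub_eq_half_sub_abs, ← huber_gap_eq hω.ne']
      ring
    rw [hgap]
    exact huber_gap_mem_Icc hω h
  · simpa using (by positivity : 0 ≤ ω / 4)

theorem stmt2 (ℓ u ω : ℝ) (hlu : ℓ < u) (hω : 0 < ω) (hωu : ω < u - ℓ)
    (q : ℝ → ℝ)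
    (hq : ∀ x, q x = if |u + ℓ - 2*x| ≤ ω
        then (u - ℓ)/2 - ω/4 - (2*x - u - ℓ)^2/(4*ω)
        else min (x - ℓ) (u - x)) :
    ∀ x ∈ Set.Icc ℓ u,
      0 ≤ min (x - ℓ) (u - x) - q x ∧ min (x - ℓ) (u - x) - q x ≤ ω/4 :=
  stmt2_general ℓ u ω hω q hq
end

section
/- Let P be an orthogonal projector with complement P̄ = I − P, and M a symmetric matrix such that pᵀMp ≥ 0 for all p ∈ range(P̄). Then for σ ≥ (1/2)λ_max(PMP), the matrix P̄ M P̄ − P M P + 2σP is positive semidefinite. -/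
open Matrix

lemma quad_le_sup_eig (n : ℕ) (A : Matrix (Fin n) (Fin n) ℝ) (hA : A.IsHermitian)
    (x : Fin n → ℝ) :
    x ⬝ᵥ A.mulVec x ≤ (⨆ i, hA.eigenvalues i) * (x ⬝ᵥ x) := by
  rcases Nat.eq_zero_or_pos n with h0 | hn
  · subst h0
    simp [dotProduct]
  haveI : Nonempty (Fin n) := ⟨⟨0, hn⟩⟩
  set U : Matrix (Fin n) (Fin n) ℝ := (hA.eigenvectorUnitary : Matrix (Fin n) (Fin n) ℝ) with hU
  have hstar : star U = Uᵀ := by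
    ext i j; simp [star_eq_conjTranspose, conjTranspose_apply]
  set y : Fin n → ℝ := Uᵀ *ᵥ x with hy
  have hUU : U * Uᵀ = 1 := by
    have := (Matrix.mem_unitaryGroup_iff).mp hA.eigenvectorUnitary.2
    rwa [hstar] at this
  have hquad : x ⬝ᵥ A.mulVec x = ∑ i, hA.eigenvalues i * (y i * y i) := by
    conv_lhs => rw [hA.spectral_theorem]
    rw [Unitary.conjStarAlgAut_apply, ← hU, hstar]
    rw [← mulVec_mulVec, ← mulVec_mulVec, dotProduct_mulVec, ← mulVec_transpose]
    simp only [← hU, ← hy]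
    simp [dotProduct, mulVec_diagonal, Function.comp]
    ring_nf
    congr 1
    ext i
    ring
  have hnorm : y ⬝ᵥ y = x ⬝ᵥ x := by
    rw [hy, dotProduct_mulVec, vecMul_transpose, mulVec_mulVec, hUU, one_mulVec]
  rw [hquad, ← hnorm]
  have hsum : y ⬝ᵥ y = ∑ i, y i * y i := rfl
  rw [hsum, Finset.mul_sum]
  apply Finset.sum_le_sum
  intro i _
  have h1 : hA.eigenvalues i ≤ ⨆ j, hA.eigenvalues j :=
    le_ciSup (Set.Finite.bddAbove (Set.finite_range _)) i
  have h2 : 0 ≤ y i * y i := mul_self_nonneg _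
  exact mul_le_mul_of_nonneg_right h1 h2

theorem stmt10 (n : ℕ) (P Pbar M : Matrix (Fin n) (Fin n) ℝ)
    (hPsym : Pᵀ = P) (hPidem : P * P = P) (hPbar : Pbar = 1 - P) (hM : Mᵀ = M)
    (hpos : ∀ x : Fin n → ℝ, (∃ y, x = Pbar.mulVec y) → 0 ≤ x ⬝ᵥ M.mulVec x)
    (hH : (P * M * P).IsHermitian) (σ : ℝ)
    (hσ : (1/2) * (⨆ i, hH.eigenvalues i) ≤ σ) :
    ∀ x : Fin n → ℝ,
      0 ≤ x ⬝ᵥ (Pbar * M * Pbar - P * M * P + (2 * σ) • P).mulVec x := by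
  intro x
  have hPbarsym : Pbarᵀ = Pbar := by
    rw [hPbar, transpose_sub, transpose_one, hPsym]
  -- expand
  rw [add_mulVec, sub_mulVec, dotProduct_add, dotProduct_sub, smul_mulVec,
    dotProduct_smul]
  set z : Fin n → ℝ := P *ᵥ x with hz
  have hA : 0 ≤ x ⬝ᵥ (Pbar * M * Pbar) *ᵥ x := by
    have : x ⬝ᵥ (Pbar * M * Pbar) *ᵥ x = (Pbar *ᵥ x) ⬝ᵥ M *ᵥ (Pbar *ᵥ x) := by
      rw [← mulVec_mulVec, ← mulVec_mulVec, dotProduct_mulVec, ← mulVec_transpose, hPbarsym]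
    rw [this]
    exact hpos _ ⟨x, rfl⟩
  have ht : x ⬝ᵥ P *ᵥ x = z ⬝ᵥ z := by
    rw [hz, dotProduct_mulVec, dotProduct_mulVec, vecMul_mulVec, hPsym, hPidem]
  have hznn : (0:ℝ) ≤ z ⬝ᵥ z := by
    apply Finset.sum_nonneg; intro i _; exact mul_self_nonneg _
  have hB : x ⬝ᵥ (P * M * P) *ᵥ x ≤ 2 * σ * (z ⬝ᵥ z) := by
    have heq : x ⬝ᵥ (P * M * P) *ᵥ x = z ⬝ᵥ (P * M * P) *ᵥ z := by
      rw [hz, mulVec_mulVec, mul_assoc (P*M) P P, hPidem, dotProduct_mulVec,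
        dotProduct_mulVec, vecMul_mulVec, hPsym, ← Matrix.mul_assoc, ← Matrix.mul_assoc, hPidem]
    rw [heq]
    calc z ⬝ᵥ (P * M * P) *ᵥ z ≤ (⨆ i, hH.eigenvalues i) * (z ⬝ᵥ z) :=
          quad_le_sup_eig n _ hH z
      _ ≤ 2 * σ * (z ⬝ᵥ z) := by
          apply mul_le_mul_of_nonneg_right _ hznn
          linarith
  rw [ht, smul_eq_mul]
  linarith
end
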